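/- Let S ⊂ ℝ be a subring finitely generated as a ℤ-module with field of fractions K, let Γ ⊂ ℝⁿ be a free S-module of rank n spanning ℝⁿ with S-basis {γ₁,…,γₙ}. If for every non-zero γ ∈ Γ the reflection ρ_γ is a coincidence isometry of Γ, then ⟨γᵢ,γⱼ⟩/⟨γₖ,γₖ⟩ ∈ K for all 1 ≤ i,j,k ≤ n. -/

import Mathlib

/-! The coordinates in the basis `b` of a vector of `Γ` lie in `S`, so a vector having a non-zero
integer multiple in `Γ` has coordinates in `K`. Since `Γ` and `ρ_γ(Γ)` are commensurate, this
applies to `ρ_γ(y) = y - 2⟨y,γ⟩/⟨γ,γ⟩ γ` for `y, γ ∈ Γ`; comparing one non-zero coordinate of `γ`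
gives `⟨y,γ⟩/⟨γ,γ⟩ ∈ K`. Ratios of squared lengths then follow by comparing two vectors through
each other, or through their sum when they are orthogonal. -/

open Matrix

/-- Two additive subgroups of `ℝⁿ` are commensurate if their intersection has
finite index in both. -/
def Commensurate {n : ℕ} (Γ Γ' : AddSubgroup (Fin n → ℝ)) : Prop :=
  (Γ'.addSubgroupOf Γ).index ≠ 0 ∧ (Γ.addSubgroupOf Γ').index ≠ 0

/-- The matrix of the reflection `ρ_γ : x ↦ x - 2(⟨x,γ⟩/⟨γ,γ⟩)γ` along `γ`. -/
noncomputable def reflMatrix {n : ℕ} (γ : Fin n → ℝ) : Matrix (Fin n) (Fin n) ℝ :=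
  1 - (2 / dotProduct γ γ) • Matrix.vecMulVec γ γ

/-- `Q` (acting on `ℝⁿ` by `x ↦ Q.mulVec x`) is a coincidence isometry of `Γ`:
it is orthogonal and `Γ` is commensurate with its image `Q(Γ)`. -/
def IsCoincidenceIsometry {n : ℕ} (Γ : AddSubgroup (Fin n → ℝ))
    (Q : Matrix (Fin n) (Fin n) ℝ) : Prop :=
  Q ∈ Matrix.orthogonalGroup (Fin n) ℝ ∧
    Commensurate Γ (Γ.map Q.mulVecLin.toAddMonoidHom)

/-- `Q` is a product of at most `n` reflections along non-zero elements of `Γ`. -/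
def IsProdOfAtMostNCoincReflections {n : ℕ} (Γ : AddSubgroup (Fin n → ℝ))
    (Q : Matrix (Fin n) (Fin n) ℝ) : Prop :=
  ∃ k : ℕ, k ≤ n ∧ ∃ g : Fin k → (Fin n → ℝ), (∀ i, g i ∈ Γ ∧ g i ≠ 0) ∧
    Q = (List.ofFn fun i => reflMatrix (g i)).prod

/-- `b` is an `S`-basis of `Γ` which is also an `ℝ`-basis of `ℝⁿ`; i.e. `Γ` is
a free `S`-module of rank `n` spanning `ℝⁿ` with basis `b`. -/
def IsSBasisOf {n : ℕ} (S : Subring ℝ) (b : Fin n → (Fin n → ℝ))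
    (Γ : AddSubgroup (Fin n → ℝ)) : Prop :=
  LinearIndependent ℝ b ∧ Submodule.span ℝ (Set.range b) = ⊤ ∧
    ∀ x, x ∈ Γ ↔ ∃ c : Fin n → ℝ, (∀ i, c i ∈ S) ∧ x = ∑ i, c i • b i


lemma reflMatrix_mulVec {n : ℕ} (γ x : Fin n → ℝ) :
    reflMatrix γ *ᵥ x = x - (2 * (x ⬝ᵥ γ) / (γ ⬝ᵥ γ)) • γ := by
  have hvm : vecMulVec γ γ *ᵥ x = (γ ⬝ᵥ x) • γ := by
    ext i
    simp only [mulVec, vecMulVec_apply, dotProduct, Pi.smul_apply, smul_eq_mul, Finset.sum_mul]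
    exact Finset.sum_congr rfl fun j _ => by ring
  rw [reflMatrix, sub_mulVec, one_mulVec, smul_mulVec, hvm, smul_smul, dotProduct_comm γ x]
  ring_nf

lemma Commensurate.exists_nsmul_mem {n : ℕ} {Γ Γ' : AddSubgroup (Fin n → ℝ)}
    (h : Commensurate Γ Γ') {y : Fin n → ℝ} (hy : y ∈ Γ') :
    ∃ N : ℕ, N ≠ 0 ∧ N • y ∈ Γ := by
  refine ⟨_, h.2, ?_⟩
  simpa [AddSubgroup.mem_addSubgroupOf] using
    AddSubgroup.nsmul_index_mem (Γ.addSubgroupOf Γ') (⟨y, hy⟩ : Γ')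

namespace IsSBasisOf

variable {n : ℕ} {S : Subring ℝ} {b : Fin n → Fin n → ℝ} {Γ : AddSubgroup (Fin n → ℝ)}

noncomputable def basis (hb : IsSBasisOf S b Γ) : Module.Basis (Fin n) ℝ (Fin n → ℝ) :=
  Module.Basis.mk hb.1 hb.2.1.ge

lemma coe_basis (hb : IsSBasisOf S b Γ) : ⇑hb.basis = b :=
  funext (Module.Basis.mk_apply _ _)

lemma repr_mem (hb : IsSBasisOf S b Γ) {x : Fin n → ℝ} (hx : x ∈ Γ) (i : Fin n) :
    hb.basis.repr x i ∈ S := by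
  obtain ⟨c, hc, rfl⟩ := (hb.2.2 x).1 hx
  have hrepr := hb.basis.repr_sum_self c
  rw [hb.coe_basis] at hrepr
  rw [hrepr]
  exact hc i

lemma apply_mem (hb : IsSBasisOf S b Γ) (i : Fin n) : b i ∈ Γ :=
  (hb.2.2 _).2 ⟨Pi.single i 1, fun j => by
    rcases eq_or_ne j i with rfl | hji
    · simp
    · simp [hji], by simp [Pi.single_apply, ite_smul]⟩

variable {K : Subfield ℝ}

lemma repr_mem_of_nsmul_mem (hb : IsSBasisOf S b Γ) (hSK : (S : Set ℝ) ⊆ K) {N : ℕ}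
    (hN : N ≠ 0) {v : Fin n → ℝ} (hv : N • v ∈ Γ) (i : Fin n) : hb.basis.repr v i ∈ K := by
  have hcoord : hb.basis.repr v i = hb.basis.repr (N • v) i / N := by
    rw [map_nsmul, Finsupp.smul_apply, nsmul_eq_mul]
    field_simp
  rw [hcoord]
  exact K.div_mem (hSK (hb.repr_mem hv i)) (natCast_mem K N)

lemma dotProduct_div_dotProduct_self_mem (hb : IsSBasisOf S b Γ) (hSK : (S : Set ℝ) ⊆ K)
    (hrefl : ∀ γ ∈ Γ, γ ≠ 0 → IsCoincidenceIsometry Γ (reflMatrix γ))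
    {y γ : Fin n → ℝ} (hy : y ∈ Γ) (hγ : γ ∈ Γ) : y ⬝ᵥ γ / (γ ⬝ᵥ γ) ∈ K := by
  rcases eq_or_ne γ 0 with rfl | hγ0
  · simp
  obtain ⟨N, hN, hNmem⟩ := (hrefl γ hγ hγ0).2.exists_nsmul_mem
    (AddSubgroup.mem_map_of_mem (reflMatrix γ).mulVecLin.toAddMonoidHom hy)
  obtain ⟨i, hi⟩ : ∃ i, hb.basis.repr γ i ≠ 0 := by
    by_contra! h
    exact hγ0 (hb.basis.repr.injective (by ext i; simp [h i]))
  set t := 2 * (y ⬝ᵥ γ) / (γ ⬝ᵥ γ)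
  have hreflected : hb.basis.repr (y - t • γ) i ∈ K := by
    rw [← reflMatrix_mulVec]
    exact hb.repr_mem_of_nsmul_mem hSK hN hNmem i
  have ht : t = (hb.basis.repr y i - hb.basis.repr (y - t • γ) i) / hb.basis.repr γ i := by
    simp only [map_sub, map_smul, Finsupp.sub_apply, Finsupp.smul_apply, smul_eq_mul]
    field_simp
    ring
  have htK : t ∈ K := by
    rw [ht]
    exact K.div_mem (K.sub_mem (hSK (hb.repr_mem hy i)) hreflected) (hSK (hb.repr_mem hγ i))
  have hhalf : y ⬝ᵥ γ / (γ ⬝ᵥ γ) = t / 2 := by ring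
  rw [hhalf]
  exact K.div_mem htK (ofNat_mem K 2)

end IsSBasisOf

section RatioOfDotProducts

variable {ι : Type*} [Fintype ι] {Γ : AddSubgroup (ι → ℝ)} {K : Subfield ℝ}

lemma dotProduct_self_div_dotProduct_self_mem
    (hmem : ∀ x ∈ Γ, ∀ y ∈ Γ, x ⬝ᵥ y / (y ⬝ᵥ y) ∈ K) {x y : ι → ℝ} (hx : x ∈ Γ) (hy : y ∈ Γ) :
    x ⬝ᵥ x / (y ⬝ᵥ y) ∈ K := by
  rcases eq_or_ne (x ⬝ᵥ y) 0 with horth | hxy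
  · have hx' : x ⬝ᵥ (x + y) = x ⬝ᵥ x := by simp [dotProduct_add, horth]
    have hy' : y ⬝ᵥ (x + y) = y ⬝ᵥ y := by simp [dotProduct_add, dotProduct_comm y x, horth]
    rcases eq_or_ne ((x + y) ⬝ᵥ (x + y)) 0 with hsum | hsum
    · have hy0 : y = 0 := by
        rw [dotProduct_self_eq_zero] at hsum
        rw [← dotProduct_self_eq_zero, ← hy', hsum, dotProduct_zero]
      simp [hy0]
    rw [← hx', ← hy', ← div_div_div_cancel_right₀ hsum]
    exact K.div_mem (hmem x hx _ (Γ.add_mem hx hy)) (hmem y hy _ (Γ.add_mem hx hy))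
  · have hxx : x ⬝ᵥ x ≠ 0 := fun h => hxy (by simp [dotProduct_self_eq_zero.1 h])
    have hquot : x ⬝ᵥ x / (y ⬝ᵥ y) = x ⬝ᵥ y / (y ⬝ᵥ y) / (y ⬝ᵥ x / (x ⬝ᵥ x)) := by
      rw [dotProduct_comm y x]
      field_simp
    rw [hquot]
    exact K.div_mem (hmem x hx y hy) (hmem y hy x hx)

lemma dotProduct_div_dotProduct_self_mem_of_forall
    (hmem : ∀ x ∈ Γ, ∀ y ∈ Γ, x ⬝ᵥ y / (y ⬝ᵥ y) ∈ K) {x y z : ι → ℝ} (hx : x ∈ Γ) (hy : y ∈ Γ)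
    (hz : z ∈ Γ) : x ⬝ᵥ y / (z ⬝ᵥ z) ∈ K := by
  rcases eq_or_ne (y ⬝ᵥ y) 0 with hyy | hyy
  · simp [dotProduct_self_eq_zero.1 hyy]
  have hsplit : x ⬝ᵥ y / (z ⬝ᵥ z) = x ⬝ᵥ y / (y ⬝ᵥ y) * (y ⬝ᵥ y / (z ⬝ᵥ z)) := by
    field_simp
  rw [hsplit]
  exact K.mul_mem (hmem x hx y hy) (dotProduct_self_div_dotProduct_self_mem hmem hy hz)

end RatioOfDotProducts

theorem stmt14_general {n : ℕ} (S : Subring ℝ)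
    (K : Subfield ℝ)
    (hK : ∀ x : ℝ, x ∈ K ↔ ∃ a b : ℝ, a ∈ S ∧ b ∈ S ∧ b ≠ 0 ∧ x = a / b)
    (Γ : AddSubgroup (Fin n → ℝ)) (b : Fin n → (Fin n → ℝ)) (hb : IsSBasisOf S b Γ)
    (hrefl : ∀ γ ∈ Γ, γ ≠ 0 → IsCoincidenceIsometry Γ (reflMatrix γ)) :
    ∀ i j k, dotProduct (b i) (b j) / dotProduct (b k) (b k) ∈ K := by
  have hSK : (S : Set ℝ) ⊆ K := fun s hs => (hK s).2 ⟨s, 1, hs, S.one_mem, one_ne_zero, by simp⟩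
  intro i j k
  exact dotProduct_div_dotProduct_self_mem_of_forall
    (fun x hx y hy => hb.dotProduct_div_dotProduct_self_mem hSK hrefl hx hy)
    (hb.apply_mem i) (hb.apply_mem j) (hb.apply_mem k)

theorem stmt14 {n : ℕ} (S : Subring ℝ) (hS : Module.Finite ℤ S)
    (K : Subfield ℝ)
    (hK : ∀ x : ℝ, x ∈ K ↔ ∃ a b : ℝ, a ∈ S ∧ b ∈ S ∧ b ≠ 0 ∧ x = a / b)
    (Γ : AddSubgroup (Fin n → ℝ)) (b : Fin n → (Fin n → ℝ)) (hb : IsSBasisOf S b Γ)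
    (hrefl : ∀ γ ∈ Γ, γ ≠ 0 → IsCoincidenceIsometry Γ (reflMatrix γ)) :
    ∀ i j k, dotProduct (b i) (b j) / dotProduct (b k) (b k) ∈ K :=
  stmt14_general S K hK Γ b hb hrefl
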